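/- Let B be a finite double groupoid and E its core groupoid. For any box B ∈ B with bottom-left vertex Q = bl(B), the corner function value ⌝(B) = |Ur(B)| (number of boxes with the same top and right edges as B) equals |C_Q| · |E(Q)|, where C_Q is the connected component of Q in the equivalence relation on P induced by E, and E(Q) is the isotropy group of E at Q. In particular, ⌝(B) depends only on the vertex bl(B). -/
import Mathlib


/-- A groupoid over a base `Pt`, given concretely by a set of arrows with source and
target maps, identities, a (total, but only meaningful on composable pairs)
composition written in diagrammatic order (`comp g h` is "`g` then `h`",
defined when `e g = s h`), and inverses. -/
structure PreGroupoid (Pt : Type) (Arr : Type) where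
  s : Arr → Pt
  e : Arr → Pt
  id : Pt → Arr
  comp : Arr → Arr → Arr
  inv : Arr → Arr
  s_id : ∀ p, s (id p) = p
  e_id : ∀ p, e (id p) = p
  s_comp : ∀ g h, e g = s h → s (comp g h) = s g
  e_comp : ∀ g h, e g = s h → e (comp g h) = e h
  id_comp : ∀ g, comp (id (s g)) g = g
  comp_id : ∀ g, comp g (id (e g)) = g
  assoc : ∀ g h k, e g = s h → e h = s k → comp (comp g h) k = comp g (comp h k)
  s_inv : ∀ g, s (inv g) = e g
  e_inv : ∀ g, e (inv g) = s g
  comp_inv : ∀ g, comp g (inv g) = id (s g)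
  inv_comp : ∀ g, comp (inv g) g = id (e g)

/-- An action of a groupoid `G` over `Pt` on a fiber bundle `p : E → Pt`:
`act g x` is meaningful when `G.e g = p x`, lands in the fiber over `G.s g`,
is compatible with composition (`(gh) ▷ x = g ▷ (h ▷ x)`) and identities act
trivially. -/
structure GroupoidAction {Pt Arr E : Type} (G : PreGroupoid Pt Arr) (p : E → Pt) where
  act : Arr → E → E
  p_act : ∀ g x, G.e g = p x → p (act g x) = G.s g
  act_id : ∀ x, act (G.id (p x)) x = x
  act_comp : ∀ g h x, G.e g = G.s h → G.e h = p x →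
    act (G.comp g h) x = act g (act h x)

/-! ### Double groupoids.
A double groupoid with base `Pt`, boxes `Bx`, horizontal edges `Hh` and vertical
edges `Vv`: `hor` and `ver` are the edge groupoids over `Pt` (for a horizontal
edge `x`, `hor.s x` / `hor.e x` are its left / right endpoints; for a vertical
edge `g`, `ver.s g` / `ver.e g` are its top / bottom endpoints); `bh` is the
horizontal composition groupoid of boxes over `Vv` (source = left edge, target =
right edge) and `bv` the vertical composition groupoid of boxes over `Hh`
(source = top edge, target = bottom edge), subject to compatibility of the edge
maps with the compositions and identities, and the interchange law. -/
structure DoubleGroupoid (Pt Bx Hh Vv : Type) where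
  hor : PreGroupoid Pt Hh
  ver : PreGroupoid Pt Vv
  bh : PreGroupoid Vv Bx
  bv : PreGroupoid Hh Bx
  match_tl : ∀ A, hor.s (bv.s A) = ver.s (bh.s A)
  match_tr : ∀ A, hor.e (bv.s A) = ver.s (bh.e A)
  match_bl : ∀ A, hor.s (bv.e A) = ver.e (bh.s A)
  match_br : ∀ A, hor.e (bv.e A) = ver.e (bh.e A)
  t_hcomp : ∀ A C, bh.e A = bh.s C → bv.s (bh.comp A C) = hor.comp (bv.s A) (bv.s C)
  b_hcomp : ∀ A C, bh.e A = bh.s C → bv.e (bh.comp A C) = hor.comp (bv.e A) (bv.e C)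
  l_vcomp : ∀ A C, bv.e A = bv.s C → bh.s (bv.comp A C) = ver.comp (bh.s A) (bh.s C)
  r_vcomp : ∀ A C, bv.e A = bv.s C → bh.e (bv.comp A C) = ver.comp (bh.e A) (bh.e C)
  t_idh : ∀ g, bv.s (bh.id g) = hor.id (ver.s g)
  b_idh : ∀ g, bv.e (bh.id g) = hor.id (ver.e g)
  l_idv : ∀ x, bh.s (bv.id x) = ver.id (hor.s x)
  r_idv : ∀ x, bh.e (bv.id x) = ver.id (hor.e x)
  idh_vcomp : ∀ g g', ver.e g = ver.s g' →
    bv.comp (bh.id g) (bh.id g') = bh.id (ver.comp g g')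
  idv_hcomp : ∀ x y, hor.e x = hor.s y →
    bh.comp (bv.id x) (bv.id y) = bv.id (hor.comp x y)
  theta_eq : ∀ p, bh.id (ver.id p) = bv.id (hor.id p)
  interchange : ∀ A C A' C', bh.e A = bh.s C → bh.e A' = bh.s C' →
    bv.e A = bv.s A' → bv.e C = bv.s C' →
    bv.comp (bh.comp A C) (bh.comp A' C') = bh.comp (bv.comp A A') (bv.comp C C')

namespace DoubleGroupoid

variable {Pt Bx Hh Vv : Type} (D : DoubleGroupoid Pt Bx Hh Vv)

/-- Top edge of a box. -/
def top (A : Bx) : Hh := D.bv.s A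
/-- Bottom edge of a box. -/
def bot (A : Bx) : Hh := D.bv.e A
/-- Left edge of a box. -/
def lft (A : Bx) : Vv := D.bh.s A
/-- Right edge of a box. -/
def rgt (A : Bx) : Vv := D.bh.e A
/-- Top-left vertex of a box. -/
def tlv (A : Bx) : Pt := D.ver.s (D.bh.s A)
/-- Bottom-left vertex of a box. -/
def blv (A : Bx) : Pt := D.ver.e (D.bh.s A)
/-- Bottom-right vertex of a box. -/
def brv (A : Bx) : Pt := D.ver.e (D.bh.e A)
/-- The doubly degenerate box `Θ_p` at a point. -/
def theta (p : Pt) : Bx := D.bh.id (D.ver.id p)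
/-- The core groupoid: boxes whose top and right edges are identities.  (Its source
and target maps are the bottom-left and bottom-right vertices.) -/
def core : Set Bx :=
  {E | (∃ p, D.bv.s E = D.hor.id p) ∧ (∃ q, D.bh.e E = D.ver.id q)}
/-- The action of the core groupoid on boxes:
`E ⇀ A = {(id l(A), A) over (E, id b(A))}`; since `id l(A) ⬝ A = A`, this is the
vertical composite of `A` over `E ⬝ id b(A)`.  It is meaningful when
`br(E) = bl(A)`.  For `E, M` in the core, `coreAct E M` is also the core
composition `E ∘ M`. -/
def coreAct (E A : Bx) : Bx :=
  D.bv.comp A (D.bh.comp E (D.bv.id (D.bv.e A)))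
/-- The associated bundle `K`: boxes all of whose edges are identities. -/
def kBundle : Set Bx :=
  {K | (∃ p, D.bv.s K = D.hor.id p) ∧ (∃ p, D.bv.e K = D.hor.id p) ∧
       (∃ p, D.bh.s K = D.ver.id p) ∧ (∃ p, D.bh.e K = D.ver.id p)}

end DoubleGroupoid

namespace PreGroupoid

variable {Pt Arr : Type} (G : PreGroupoid Pt Arr)

theorem inv_uniq {g h : Arr} (hc : G.e g = G.s h) (h1 : G.comp g h = G.id (G.s g)) :
    h = G.inv g := by
  have h2 := G.assoc (G.inv g) g h (G.e_inv g) hc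
  rw [G.inv_comp, h1, hc, G.id_comp] at h2
  rw [h2, ← G.e_inv g, G.comp_id]

theorem inv_id (p : Pt) : G.inv (G.id p) = G.id p := by
  refine (G.inv_uniq (by rw [G.e_id, G.s_id]) ?_).symm
  rw [G.s_id]
  have h := G.id_comp (G.id p)
  rwa [G.s_id] at h

end PreGroupoid

namespace DoubleGroupoid

variable {Pt Bx Hh Vv : Type} (D : DoubleGroupoid Pt Bx Hh Vv)

theorem lft_vinv (A : Bx) : D.bh.s (D.bv.inv A) = D.ver.inv (D.bh.s A) := by
  apply D.ver.inv_uniq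
  · rw [← D.match_tl, D.bv.s_inv, D.match_bl]
  · rw [← D.l_vcomp _ _ (D.bv.s_inv A).symm, D.bv.comp_inv, D.l_idv, D.match_tl]

theorem rgt_vinv (A : Bx) : D.bh.e (D.bv.inv A) = D.ver.inv (D.bh.e A) := by
  apply D.ver.inv_uniq
  · rw [← D.match_tr, D.bv.s_inv, D.match_br]
  · rw [← D.r_vcomp _ _ (D.bv.s_inv A).symm, D.bv.comp_inv, D.r_idv, D.match_tr]

theorem core_rgt {E : Bx} (hE : E ∈ D.core) :
    D.bh.e E = D.ver.id (D.ver.e (D.bh.e E)) := by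
  obtain ⟨_, q, hq⟩ := hE
  rw [hq, D.ver.e_id]

theorem core_top {E : Bx} (hE : E ∈ D.core) :
    D.bv.s E = D.hor.id (D.ver.e (D.bh.e E)) := by
  obtain ⟨⟨a, ha⟩, _⟩ := hE.imp id id
  have h2 := D.core_rgt hE
  have h3 := D.match_tr E
  rw [ha, h2, D.hor.e_id, D.ver.s_id] at h3
  rw [ha, h3]

theorem core_tlv {E : Bx} (hE : E ∈ D.core) :
    D.ver.s (D.bh.s E) = D.ver.e (D.bh.e E) := by
  rw [← D.match_tl, D.core_top hE, D.hor.s_id]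


section Act

variable {E M F : Bx} {x : Hh}

theorem pad_lft (hE : E ∈ D.core) (h : D.ver.e (D.bh.e E) = D.hor.s x) :
    D.bh.e E = D.bh.s (D.bv.id x) := by
  rw [D.core_rgt hE, D.l_idv, h]

theorem pad_top (hE : E ∈ D.core) (h : D.ver.e (D.bh.e E) = D.hor.s x) :
    D.bv.s (D.bh.comp E (D.bv.id x)) = x := by
  rw [D.t_hcomp _ _ (D.pad_lft hE h), D.core_top hE, D.bv.s_id, h, D.hor.id_comp]

theorem pad_bot (hE : E ∈ D.core) (h : D.ver.e (D.bh.e E) = D.hor.s x) :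
    D.bv.e (D.bh.comp E (D.bv.id x)) = D.hor.comp (D.bv.e E) x := by
  rw [D.b_hcomp _ _ (D.pad_lft hE h), D.bv.e_id]

theorem pad_rgt (hE : E ∈ D.core) (h : D.ver.e (D.bh.e E) = D.hor.s x) :
    D.bh.e (D.bh.comp E (D.bv.id x)) = D.ver.id (D.hor.e x) := by
  rw [D.bh.e_comp _ _ (D.pad_lft hE h), D.r_idv]

theorem pad_lft' (hE : E ∈ D.core) (h : D.ver.e (D.bh.e E) = D.hor.s x) :
    D.bh.s (D.bh.comp E (D.bv.id x)) = D.bh.s E :=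
  D.bh.s_comp _ _ (D.pad_lft hE h)

theorem blv_eq (M : Bx) : D.ver.e (D.bh.e M) = D.hor.s (D.bv.e M) → True := fun _ => trivial

theorem act_hs (h : D.ver.e (D.bh.e E) = D.ver.e (D.bh.s M)) :
    D.ver.e (D.bh.e E) = D.hor.s (D.bv.e M) := by rw [D.match_bl]; exact h

theorem act_top (hE : E ∈ D.core) (h : D.ver.e (D.bh.e E) = D.ver.e (D.bh.s M)) :
    D.bv.s (D.coreAct E M) = D.bv.s M :=
  D.bv.s_comp _ _ (D.pad_top hE (D.act_hs h)).symm

theorem act_bot (hE : E ∈ D.core) (h : D.ver.e (D.bh.e E) = D.ver.e (D.bh.s M)) :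
    D.bv.e (D.coreAct E M) = D.hor.comp (D.bv.e E) (D.bv.e M) := by
  rw [coreAct, D.bv.e_comp _ _ (D.pad_top hE (D.act_hs h)).symm,
    D.pad_bot hE (D.act_hs h)]

theorem act_rgt (hE : E ∈ D.core) (h : D.ver.e (D.bh.e E) = D.ver.e (D.bh.s M)) :
    D.bh.e (D.coreAct E M) = D.bh.e M := by
  rw [coreAct, D.r_vcomp _ _ (D.pad_top hE (D.act_hs h)).symm,
    D.pad_rgt hE (D.act_hs h), D.match_br, D.ver.comp_id]

theorem act_lft (hE : E ∈ D.core) (h : D.ver.e (D.bh.e E) = D.ver.e (D.bh.s M)) :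
    D.bh.s (D.coreAct E M) = D.ver.comp (D.bh.s M) (D.bh.s E) := by
  rw [coreAct, D.l_vcomp _ _ (D.pad_top hE (D.act_hs h)).symm,
    D.pad_lft' hE (D.act_hs h)]

theorem act_blv (hE : E ∈ D.core) (h : D.ver.e (D.bh.e E) = D.ver.e (D.bh.s M)) :
    D.ver.e (D.bh.s (D.coreAct E M)) = D.ver.e (D.bh.s E) := by
  rw [D.act_lft hE h, D.ver.e_comp]
  rw [D.core_tlv hE, ← h]

theorem act_brv (hE : E ∈ D.core) (h : D.ver.e (D.bh.e E) = D.ver.e (D.bh.s M)) :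
    D.ver.e (D.bh.e (D.coreAct E M)) = D.ver.e (D.bh.e M) := by
  rw [D.act_rgt hE h]

theorem act_core (hE : E ∈ D.core) (hM : M ∈ D.core)
    (h : D.ver.e (D.bh.e E) = D.ver.e (D.bh.s M)) : D.coreAct E M ∈ D.core :=
  ⟨⟨_, by rw [D.act_top hE h]; exact D.core_top hM⟩,
   ⟨_, by rw [D.act_rgt hE h]; exact D.core_rgt hM⟩⟩

theorem theta_core (p : Pt) : D.theta p ∈ D.core :=
  ⟨⟨p, by rw [theta, D.t_idh, D.ver.s_id]⟩, ⟨p, by rw [theta, D.bh.e_id]⟩⟩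

theorem theta_blv (p : Pt) : D.ver.e (D.bh.s (D.theta p)) = p := by
  rw [theta, D.bh.s_id, D.ver.e_id]

theorem theta_brv (p : Pt) : D.ver.e (D.bh.e (D.theta p)) = p := by
  rw [theta, D.bh.e_id, D.ver.e_id]

theorem act_theta_left {p : Pt} (h : D.ver.e (D.bh.s M) = p) :
    D.coreAct (D.theta p) M = M := by
  have h1 : D.ver.id p = D.bh.s (D.bv.id (D.bv.e M)) := by
    rw [D.l_idv, D.match_bl, h]
  rw [coreAct, theta, h1, D.bh.id_comp, D.bv.comp_id]

theorem act_theta_right {p : Pt} (hE : E ∈ D.core) (h : D.ver.e (D.bh.e E) = p) :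
    D.coreAct E (D.theta p) = E := by
  have h1 : D.bv.e (D.theta p) = D.hor.id p := by
    rw [theta, D.b_idh, D.ver.e_id]
  have h2 : D.bv.id (D.hor.id p) = D.bh.id (D.bh.e E) := by
    rw [← D.theta_eq, D.core_rgt hE, h]
  rw [coreAct, h1, h2, D.bh.comp_id]
  have h3 : D.theta p = D.bv.id (D.bv.s E) := by
    rw [D.core_top hE, h, theta, D.theta_eq]
  rw [h3, D.bv.id_comp]

end Act

/-- The inverse in the core groupoid. -/
def coreInv (E : Bx) : Bx :=
  D.bh.comp (D.bv.inv E) (D.bv.id (D.hor.inv (D.bv.e E)))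

section Inv

variable {E F M : Bx}

theorem inv_c (hE : E ∈ D.core) :
    D.bh.e (D.bv.inv E) = D.bh.s (D.bv.id (D.hor.inv (D.bv.e E))) := by
  rw [D.rgt_vinv, D.core_rgt hE, D.ver.inv_id, D.l_idv, D.hor.s_inv, D.match_br]

theorem coreInv_top (hE : E ∈ D.core) :
    D.bv.s (D.coreInv E) = D.hor.id (D.ver.e (D.bh.s E)) := by
  rw [coreInv, D.t_hcomp _ _ (D.inv_c hE), D.bv.s_inv, D.bv.s_id, D.hor.comp_inv,
    D.match_bl]

theorem coreInv_rgt (hE : E ∈ D.core) :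
    D.bh.e (D.coreInv E) = D.ver.id (D.ver.e (D.bh.s E)) := by
  rw [coreInv, D.bh.e_comp _ _ (D.inv_c hE), D.r_idv, D.hor.e_inv, D.match_bl]

theorem coreInv_core (hE : E ∈ D.core) : D.coreInv E ∈ D.core :=
  ⟨⟨_, D.coreInv_top hE⟩, ⟨_, D.coreInv_rgt hE⟩⟩

theorem coreInv_brv (hE : E ∈ D.core) :
    D.ver.e (D.bh.e (D.coreInv E)) = D.ver.e (D.bh.s E) := by
  rw [D.coreInv_rgt hE, D.ver.e_id]

theorem coreInv_blv (hE : E ∈ D.core) :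
    D.ver.e (D.bh.s (D.coreInv E)) = D.ver.e (D.bh.e E) := by
  rw [coreInv, D.bh.s_comp _ _ (D.inv_c hE), D.lft_vinv, D.ver.e_inv, D.core_tlv hE]

theorem coreInv_bot (hE : E ∈ D.core) :
    D.bv.e (D.coreInv E) = D.hor.inv (D.bv.e E) := by
  rw [coreInv, D.b_hcomp _ _ (D.inv_c hE), D.bv.e_inv, D.bv.e_id, D.core_top hE,
    ← D.match_br, ← D.hor.s_inv, D.hor.id_comp]

theorem act_coreInv_right (hE : E ∈ D.core) :
    D.coreAct E (D.coreInv E) = D.theta (D.ver.e (D.bh.s E)) := by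
  have hb := D.coreInv_bot hE
  have h2 : D.bh.e E = D.bh.s (D.bv.id (D.hor.inv (D.bv.e E))) :=
    D.pad_lft hE (by rw [D.hor.s_inv, D.match_br])
  have h4 : D.bv.e (D.bv.id (D.hor.inv (D.bv.e E)))
      = D.bv.s (D.bv.id (D.hor.inv (D.bv.e E))) := by rw [D.bv.e_id, D.bv.s_id]
  have hJJ : D.bv.comp (D.bv.id (D.hor.inv (D.bv.e E)))
      (D.bv.id (D.hor.inv (D.bv.e E))) = D.bv.id (D.hor.inv (D.bv.e E)) := by
    have h := D.bv.comp_id (D.bv.id (D.hor.inv (D.bv.e E)))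
    rwa [D.bv.e_id] at h
  rw [coreAct, hb, coreInv,
    D.interchange _ _ _ _ (D.inv_c hE) h2 (D.bv.e_inv E) h4,
    D.bv.inv_comp, hJJ, D.idv_hcomp _ _ (D.hor.s_inv _).symm,
    D.hor.comp_inv, D.match_bl, theta, D.theta_eq]

theorem act_coreInv_left (hE : E ∈ D.core) :
    D.coreAct (D.coreInv E) E = D.theta (D.ver.e (D.bh.e E)) := by
  have hJI : D.bh.e (D.bv.id (D.hor.inv (D.bv.e E))) = D.bh.s (D.bv.id (D.bv.e E)) := by
    rw [D.r_idv, D.l_idv, D.hor.e_inv]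
  have hrec : D.bh.e (D.bv.inv E) = D.ver.id (D.ver.e (D.bh.e E)) := by
    conv_lhs => rw [D.rgt_vinv, D.core_rgt hE, D.ver.inv_id]
  rw [coreAct, coreInv, D.bh.assoc _ _ _ (D.inv_c hE) hJI,
    D.idv_hcomp _ _ (D.hor.e_inv _), D.hor.inv_comp, D.match_br, ← D.theta_eq,
    ← hrec, D.bh.comp_id, D.bv.comp_inv, D.core_top hE, theta, D.theta_eq]

theorem act_assoc (hE : E ∈ D.core) (hF : F ∈ D.core)
    (hEF : D.ver.e (D.bh.e E) = D.ver.e (D.bh.s F))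
    (hFM : D.ver.e (D.bh.e F) = D.ver.e (D.bh.s M)) :
    D.coreAct E (D.coreAct F M) = D.coreAct (D.coreAct E F) M := by
  have hb : D.ver.e (D.bh.e F) = D.hor.s (D.bv.e M) := D.act_hs hFM
  have hcFb : D.hor.e (D.bv.e F) = D.hor.s (D.bv.e M) := by
    rw [D.match_br, hFM, ← D.match_bl]
  have hEb2 : D.ver.e (D.bh.e E) = D.hor.s (D.bv.e F) := by
    rw [D.match_bl]; exact hEF
  have hEb' : D.ver.e (D.bh.e E) = D.hor.s (D.hor.comp (D.bv.e F) (D.bv.e M)) := by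
    rw [D.hor.s_comp _ _ hcFb]; exact hEb2
  have hbot' : D.bv.e (D.bv.comp M (D.bh.comp F (D.bv.id (D.bv.e M))))
      = D.hor.comp (D.bv.e F) (D.bv.e M) := D.act_bot hF hFM
  have cond1 : D.bv.e M = D.bv.s (D.bh.comp F (D.bv.id (D.bv.e M))) :=
    (D.pad_top hF hb).symm
  have cond2 : D.bv.e (D.bh.comp F (D.bv.id (D.bv.e M)))
      = D.bv.s (D.bh.comp E (D.bv.id (D.hor.comp (D.bv.e F) (D.bv.e M)))) := by
    rw [D.pad_bot hF hb, D.pad_top hE hEb']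
  have cond3 : D.bh.e (D.bv.id (D.bv.e F)) = D.bh.s (D.bv.id (D.bv.e M)) := by
    rw [D.r_idv, D.l_idv, hcFb]
  have c2 : D.bh.e (D.bh.comp E (D.bv.id (D.bv.e F))) = D.bh.s (D.bv.id (D.bv.e M)) := by
    rw [D.pad_rgt hE hEb2, D.l_idv, hcFb]
  have c3 : D.bv.e F = D.bv.s (D.bh.comp E (D.bv.id (D.bv.e F))) :=
    (D.pad_top hE hEb2).symm
  have c4 : D.bv.e (D.bv.id (D.bv.e M)) = D.bv.s (D.bv.id (D.bv.e M)) := by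
    rw [D.bv.e_id, D.bv.s_id]
  have hII : D.bv.comp (D.bv.id (D.bv.e M)) (D.bv.id (D.bv.e M))
      = D.bv.id (D.bv.e M) := by
    have h := D.bv.comp_id (D.bv.id (D.bv.e M))
    rwa [D.bv.e_id] at h
  show D.bv.comp (D.bv.comp M (D.bh.comp F (D.bv.id (D.bv.e M))))
      (D.bh.comp E (D.bv.id (D.bv.e (D.bv.comp M (D.bh.comp F (D.bv.id (D.bv.e M)))))))
      = D.bv.comp M (D.bh.comp (D.bv.comp F (D.bh.comp E (D.bv.id (D.bv.e F))))
          (D.bv.id (D.bv.e M)))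
  rw [hbot', D.bv.assoc _ _ _ cond1 cond2, ← D.idv_hcomp _ _ hcFb,
    ← D.bh.assoc E (D.bv.id (D.bv.e F)) (D.bv.id (D.bv.e M)) (D.pad_lft hE hEb2) cond3,
    D.interchange F (D.bv.id (D.bv.e M)) (D.bh.comp E (D.bv.id (D.bv.e F)))
      (D.bv.id (D.bv.e M)) (D.pad_lft hF hb) c2 c3 c4, hII]

theorem act_left_cancel (hF : F ∈ D.core)
    (h : D.ver.e (D.bh.e F) = D.ver.e (D.bh.s M)) :
    D.coreAct (D.coreInv F) (D.coreAct F M) = M := by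
  rw [D.act_assoc (D.coreInv_core hF) hF (D.coreInv_brv hF) h,
    D.act_coreInv_left hF, D.act_theta_left h.symm]

theorem act_right_cancel (hF : F ∈ D.core)
    (h : D.ver.e (D.bh.s F) = D.ver.e (D.bh.s M)) :
    D.coreAct F (D.coreAct (D.coreInv F) M) = M := by
  rw [D.act_assoc hF (D.coreInv_core hF) (D.coreInv_blv hF).symm
      (by rw [D.coreInv_brv hF]; exact h),
    D.act_coreInv_right hF, D.act_theta_left h.symm]

end Inv

section Corner

variable {A C E : Bx}

/-- The "difference" core box of `C` relative to `A`, for `C` sharing its top and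
right edges with `A`. -/
def gbox (A C : Bx) : Bx :=
  D.bh.comp (D.bv.comp (D.bv.inv A) C) (D.bv.id (D.hor.inv (D.bv.e A)))

theorem gbox_c1 (hT : D.bv.s C = D.bv.s A) : D.bv.e (D.bv.inv A) = D.bv.s C := by
  rw [D.bv.e_inv, hT]

theorem gbox_c2 (hT : D.bv.s C = D.bv.s A) (hR : D.bh.e C = D.bh.e A) :
    D.bh.e (D.bv.comp (D.bv.inv A) C) = D.ver.id (D.ver.e (D.bh.e A)) := by
  rw [D.r_vcomp _ _ (D.gbox_c1 hT), D.rgt_vinv, hR, D.ver.inv_comp]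

theorem gbox_c3 :
    D.bh.s (D.bv.id (D.hor.inv (D.bv.e A))) = D.ver.id (D.ver.e (D.bh.e A)) := by
  rw [D.l_idv, D.hor.s_inv, D.match_br]

theorem gbox_cc (hT : D.bv.s C = D.bv.s A) (hR : D.bh.e C = D.bh.e A) :
    D.bh.e (D.bv.comp (D.bv.inv A) C) = D.bh.s (D.bv.id (D.hor.inv (D.bv.e A))) := by
  rw [D.gbox_c2 hT hR, D.gbox_c3]

theorem gbox_top (hT : D.bv.s C = D.bv.s A) (hR : D.bh.e C = D.bh.e A) :
    D.bv.s (D.gbox A C) = D.hor.id (D.ver.e (D.bh.s A)) := by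
  rw [gbox, D.t_hcomp _ _ (D.gbox_cc hT hR), D.bv.s_comp _ _ (D.gbox_c1 hT),
    D.bv.s_inv, D.bv.s_id, D.hor.comp_inv, D.match_bl]

theorem gbox_rgt (hT : D.bv.s C = D.bv.s A) (hR : D.bh.e C = D.bh.e A) :
    D.bh.e (D.gbox A C) = D.ver.id (D.ver.e (D.bh.s A)) := by
  rw [gbox, D.bh.e_comp _ _ (D.gbox_cc hT hR), D.r_idv, D.hor.e_inv, D.match_bl]

theorem gbox_core (hT : D.bv.s C = D.bv.s A) (hR : D.bh.e C = D.bh.e A) :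
    D.gbox A C ∈ D.core :=
  ⟨⟨_, D.gbox_top hT hR⟩, ⟨_, D.gbox_rgt hT hR⟩⟩

theorem gbox_brv (hT : D.bv.s C = D.bv.s A) (hR : D.bh.e C = D.bh.e A) :
    D.ver.e (D.bh.e (D.gbox A C)) = D.ver.e (D.bh.s A) := by
  rw [D.gbox_rgt hT hR, D.ver.e_id]

theorem gbox_act (hE : E ∈ D.core) (h : D.ver.e (D.bh.e E) = D.ver.e (D.bh.s A)) :
    D.gbox A (D.coreAct E A) = E := by
  have hbA : D.ver.e (D.bh.e E) = D.hor.s (D.bv.e A) := D.act_hs h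
  have c2 : D.bv.e A = D.bv.s (D.bh.comp E (D.bv.id (D.bv.e A))) :=
    (D.pad_top hE hbA).symm
  have hid : D.bv.comp (D.bv.id (D.bv.e A)) (D.bh.comp E (D.bv.id (D.bv.e A)))
      = D.bh.comp E (D.bv.id (D.bv.e A)) := by
    have h' := D.bv.id_comp (D.bh.comp E (D.bv.id (D.bv.e A)))
    rwa [← c2] at h'
  have cIJ : D.bh.e (D.bv.id (D.bv.e A)) = D.bh.s (D.bv.id (D.hor.inv (D.bv.e A))) := by
    rw [D.r_idv, D.l_idv, D.hor.s_inv]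
  have hfin : D.ver.id (D.ver.e (D.bh.s A)) = D.bh.e E := by
    rw [← h]; exact (D.core_rgt hE).symm
  show D.bh.comp (D.bv.comp (D.bv.inv A)
      (D.bv.comp A (D.bh.comp E (D.bv.id (D.bv.e A)))))
      (D.bv.id (D.hor.inv (D.bv.e A))) = E
  rw [← D.bv.assoc _ _ _ (D.bv.e_inv A) c2, D.bv.inv_comp, hid,
    D.bh.assoc _ _ _ (D.pad_lft hE hbA) cIJ,
    D.idv_hcomp _ _ (D.hor.s_inv _).symm, D.hor.comp_inv, D.match_bl, ← D.theta_eq,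
    hfin, D.bh.comp_id]

theorem act_gbox (hT : D.bv.s C = D.bv.s A) (hR : D.bh.e C = D.bh.e A) :
    D.coreAct (D.gbox A C) A = C := by
  have cJI : D.bh.e (D.bv.id (D.hor.inv (D.bv.e A))) = D.bh.s (D.bv.id (D.bv.e A)) := by
    rw [D.r_idv, D.l_idv, D.hor.e_inv]
  have h2 : D.ver.id (D.ver.e (D.bh.e A)) = D.bh.e (D.bv.comp (D.bv.inv A) C) :=
    (D.gbox_c2 hT hR).symm
  show D.bv.comp A (D.bh.comp (D.bh.comp (D.bv.comp (D.bv.inv A) C)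
      (D.bv.id (D.hor.inv (D.bv.e A)))) (D.bv.id (D.bv.e A))) = C
  rw [D.bh.assoc _ _ _ (D.gbox_cc hT hR) cJI,
    D.idv_hcomp _ _ (D.hor.e_inv _), D.hor.inv_comp, D.match_br, ← D.theta_eq,
    h2, D.bh.comp_id,
    ← D.bv.assoc _ _ _ (D.bv.s_inv A).symm (D.gbox_c1 hT), D.bv.comp_inv,
    ← hT, D.bv.id_comp]

/-- A chosen core box from each point of the component of `bl(A)`. -/
noncomputable def pick (A : Bx)
    (p : {p : Pt // ∃ E ∈ D.core, D.blv E = p ∧ D.brv E = D.blv A}) : Bx :=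
  p.2.choose

theorem pick_core {A : Bx}
    (p : {p : Pt // ∃ E ∈ D.core, D.blv E = p ∧ D.brv E = D.blv A}) :
    D.pick A p ∈ D.core :=
  p.2.choose_spec.1

theorem pick_blv {A : Bx}
    (p : {p : Pt // ∃ E ∈ D.core, D.blv E = p ∧ D.brv E = D.blv A}) :
    D.ver.e (D.bh.s (D.pick A p)) = p.1 :=
  p.2.choose_spec.2.1

theorem pick_brv {A : Bx}
    (p : {p : Pt // ∃ E ∈ D.core, D.blv E = p ∧ D.brv E = D.blv A}) :
    D.ver.e (D.bh.e (D.pick A p)) = D.ver.e (D.bh.s A) :=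
  p.2.choose_spec.2.2

end Corner

/-- Decomposing core boxes ending at `bl(A)` as (component point, isotropy element). -/
noncomputable def cornerEquiv (A : Bx) :
    {E : Bx // E ∈ D.core ∧ D.ver.e (D.bh.e E) = D.ver.e (D.bh.s A)} ≃
      {p : Pt // ∃ E ∈ D.core, D.blv E = p ∧ D.brv E = D.blv A} ×
        {E : Bx // E ∈ D.core ∧ D.blv E = D.blv A ∧ D.brv E = D.blv A} := by
  refine
    { toFun := fun E =>
        (⟨D.ver.e (D.bh.s E.1), E.1, E.2.1, rfl, E.2.2⟩,
         ⟨D.coreAct (D.coreInv (D.pick A ⟨D.ver.e (D.bh.s E.1), E.1, E.2.1, rfl, E.2.2⟩))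
            E.1,
          D.act_core (D.coreInv_core (D.pick_core _)) E.2.1
            ((D.coreInv_brv (D.pick_core _)).trans (D.pick_blv _)),
          (D.act_blv (D.coreInv_core (D.pick_core _))
              ((D.coreInv_brv (D.pick_core _)).trans (D.pick_blv _))).trans
            ((D.coreInv_blv (D.pick_core _)).trans (D.pick_brv _)),
          (D.act_brv (D.coreInv_core (D.pick_core _))
              ((D.coreInv_brv (D.pick_core _)).trans (D.pick_blv _))).trans E.2.2⟩)
      invFun := fun pm =>
        ⟨D.coreAct (D.pick A pm.1) pm.2.1,
         D.act_core (D.pick_core _) pm.2.2.1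
           ((D.pick_brv _).trans pm.2.2.2.1.symm),
         (D.act_brv (D.pick_core _) ((D.pick_brv _).trans pm.2.2.2.1.symm)).trans
           pm.2.2.2.2⟩
      left_inv := fun E => Subtype.ext
        (D.act_right_cancel (D.pick_core _) (D.pick_blv _))
      right_inv := fun pm => ?_ }
  obtain ⟨p, M⟩ := pm
  have hc : D.ver.e (D.bh.e (D.pick A p)) = D.ver.e (D.bh.s M.1) :=
    (D.pick_brv _).trans M.2.2.1.symm
  have key : ∀ q, q = p →
      D.coreAct (D.coreInv (D.pick A q)) (D.coreAct (D.pick A p) M.1) = M.1 := by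
    rintro q rfl
    exact D.act_left_cancel (D.pick_core _) hc
  refine Prod.ext (Subtype.ext ?_) (Subtype.ext (key _ (Subtype.ext ?_))) <;>
    exact (D.act_blv (D.pick_core _) hc).trans (D.pick_blv _)

end DoubleGroupoid

/-- Let `B` be a finite double groupoid with core groupoid `E`.  For any box `A`
with bottom-left vertex `Q = bl(A)`, the corner function value
`⌝(A) = |Ur(A)|` (the number of boxes with the same top and right edges as `A`)
equals `|C_Q| · |E(Q)|`, where `C_Q` is the connected component of `Q` in the
equivalence relation on `Pt` induced by the core groupoid and `E(Q)` is the
isotropy group of the core groupoid at `Q`.  In particular `⌝(A)` depends only on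
the vertex `bl(A)`. -/
theorem corner_card_eq {Pt Bx Hh Vv : Type} [Finite Bx]
    (D : DoubleGroupoid Pt Bx Hh Vv) (A : Bx) :
    Nat.card {C : Bx // D.top C = D.top A ∧ D.rgt C = D.rgt A} =
      Nat.card {p : Pt // ∃ E ∈ D.core, D.blv E = p ∧ D.brv E = D.blv A} *
        Nat.card {E : Bx // E ∈ D.core ∧ D.blv E = D.blv A ∧ D.brv E = D.blv A} := by
  refine (Nat.card_congr (Equiv.trans ?_ (D.cornerEquiv A))).trans (Nat.card_prod _ _)
  exact
    { toFun := fun C => ⟨D.gbox A C.1, D.gbox_core C.2.1 C.2.2, D.gbox_brv C.2.1 C.2.2⟩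
      invFun := fun E => ⟨D.coreAct E.1 A, D.act_top E.2.1 E.2.2, D.act_rgt E.2.1 E.2.2⟩
      left_inv := fun C => Subtype.ext (D.act_gbox C.2.1 C.2.2)
      right_inv := fun E => Subtype.ext (D.gbox_act E.2.1 E.2.2) }
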